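/- arXiv:2112.02253 — 8 statements merged into one kernel-verified Lean document; each statement's English description precedes it below -/
import Mathlib

section
/- Let n ≥ 3 and let P_n be the path graph on vertex set {0,…,n−1} (i adjacent to j iff |i−j| = 1). Then the invariant ρ(P_n) := Σ_{i=1}^{n−1} (−1)^i Σ_{S ⊆ {0,…,n−1}, |S| = i} H₀(P_n[S]) equals (−1)^{n−1}. -/
/-!
Summing over all `S ⊆ V`, the sum becomes `∑_S (-1)^|S| H₀(P_n[S])` minus the terms for `S = ∅`
and `S = V`. The components of `P_n[S]` are the maximal runs of consecutive vertices of `S`, so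
`H₀(P_n[S])` counts the run starts: the `v ∈ S` with `v - 1 ∉ S`. For a fixed `v`, adding or
removing a vertex other than `v` and `v - 1` (one exists since `n ≥ 3`) does not change whether
`v` is a run start, so the signed count of the `S` in which it is one vanishes. Only
`-(-1)^n H₀(P_n) = (-1)^(n-1)` survives.
-/

/-- For a simple graph `G` and a set of vertices `S`, the number of connected
components of the induced subgraph `G[S]`. -/
noncomputable def H0 {V : Type*} (G : SimpleGraph V) (S : Set V) : ℕ :=
  Nat.card (G.induce S).ConnectedComponent

open Finset SimpleGraph

namespace Finset

variable {α R : Type*} [CommRing R]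

theorem sum_Icc_neg_one_pow_mul_sum_powersetCard (s : Finset α) (hs : s.Nonempty)
    (f : Finset α → R) :
    ∑ i ∈ Icc 1 (#s - 1), (-1 : R) ^ i * ∑ t ∈ powersetCard i s, f t
      = ∑ t ∈ s.powerset, (-1 : R) ^ #t * f t - f ∅ - (-1 : R) ^ #s * f s := by
  obtain ⟨m, hm⟩ : ∃ m, #s = m + 1 := ⟨#s - 1, by have := hs.card_pos; omega⟩
  have hgrade : ∑ t ∈ s.powerset, (-1 : R) ^ #t * f t
      = ∑ i ∈ range (#s + 1), (-1 : R) ^ i * ∑ t ∈ powersetCard i s, f t := by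
    rw [sum_powerset]
    refine sum_congr rfl fun i _ => ?_
    rw [mul_sum]
    exact sum_congr rfl fun t ht => by rw [(mem_powersetCard.1 ht).2]
  have htop : powersetCard (m + 1) s = {s} := hm ▸ powersetCard_self s
  rw [hgrade, hm, Nat.add_sub_cancel, sum_range_succ, range_eq_Ico,
    sum_eq_sum_Ico_succ_bot (by omega : 0 < m + 1), ← Ico_add_one_right_eq_Icc,
    powersetCard_zero, htop]
  simp only [sum_singleton, pow_zero, one_mul]
  ring

theorem sum_powerset_neg_one_pow_card_mul_eq_zero [DecidableEq α] {s : Finset α} {a : α}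
    (ha : a ∈ s) {f : Finset α → R} (hf : ∀ t, a ∉ t → f (insert a t) = f t) :
    ∑ t ∈ s.powerset, (-1 : R) ^ #t * f t = 0 := by
  rw [← insert_erase ha, sum_powerset_insert (notMem_erase a s), ← sum_add_distrib]
  refine sum_eq_zero fun t ht => ?_
  have hat : a ∉ t := fun h => notMem_erase a s (mem_powerset.1 ht h)
  rw [card_insert_of_notMem hat, hf t hat, pow_succ]
  ring

end Finset

section PathGraph

variable {n : ℕ} (S : Finset (Fin n))

def runStarts : Finset (Fin n) :=
  S.filter fun v => ∀ w : Fin n, (w : ℕ) + 1 = v → w ∉ S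

variable {S}

theorem le_of_reachable_of_mem_runStarts {v : Fin n} (hv : v ∈ runStarts S)
    {x y : (S : Set (Fin n))} (hxy : ((pathGraph n).induce S).Reachable x y) (hx : v ≤ x.1) :
    v ≤ y.1 := by
  obtain ⟨p⟩ := hxy
  induction p with
  | nil => exact hx
  | @cons x z y hxz _ ih =>
    refine ih ?_
    have hpred := (mem_filter.1 hv).2 z
    rw [induce_adj, pathGraph_adj] at hxz
    rw [Fin.le_iff_val_le_val] at hx ⊢
    by_contra hzv
    exact hpred (by omega) z.2

theorem exists_mem_runStarts_reachable {u : Fin n} (hu : u ∈ S) :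
    ∃ v, ∃ hv : v ∈ runStarts S,
      ((pathGraph n).induce S).Reachable ⟨v, filter_subset _ _ hv⟩ ⟨u, hu⟩ := by
  induction u using WellFoundedLT.induction with
  | _ u ih =>
    by_cases hstart : u ∈ runStarts S
    · exact ⟨u, hstart, .rfl⟩
    · obtain ⟨w, hwu, hw⟩ : ∃ w : Fin n, (w : ℕ) + 1 = u ∧ w ∈ S := by
        simpa [runStarts, hu] using hstart
      obtain ⟨v, hv, hvw⟩ := ih w (Fin.lt_def.2 (by omega)) hw
      have hadj : ((pathGraph n).induce S).Adj ⟨w, hw⟩ ⟨u, hu⟩ := by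
        rw [induce_adj, pathGraph_adj]
        exact Or.inl hwu
      exact ⟨v, hv, hvw.trans hadj.reachable⟩

theorem H0_pathGraph_eq_card_runStarts (S : Finset (Fin n)) :
    H0 (pathGraph n) S = #(runStarts S) := by
  let G := (pathGraph n).induce (S : Set (Fin n))
  let f : runStarts S → G.ConnectedComponent :=
    fun v => G.connectedComponentMk ⟨v, filter_subset _ _ v.2⟩
  have hf : f.Bijective := by
    constructor
    · intro v w hvw
      have hr := ConnectedComponent.exact hvw
      exact Subtype.ext <| le_antisymm
        (le_of_reachable_of_mem_runStarts v.2 hr le_rfl)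
        (le_of_reachable_of_mem_runStarts w.2 hr.symm le_rfl)
    · intro C
      induction C using ConnectedComponent.ind with
      | _ u =>
        obtain ⟨v, hv, hvu⟩ := exists_mem_runStarts_reachable (mem_coe.1 u.2)
        exact ⟨⟨v, hv⟩, ConnectedComponent.sound hvu⟩
  rw [H0, ← Nat.card_eq_of_bijective f hf, Nat.card_eq_finsetCard]

theorem mem_runStarts_insert_iff {v a : Fin n} (hav : a ≠ v) (hpred : (a : ℕ) + 1 ≠ v) :
    v ∈ runStarts (insert a S) ↔ v ∈ runStarts S := by
  simp only [runStarts, mem_filter, mem_insert, hav.symm, false_or, not_or]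
  exact and_congr_right fun _ =>
    forall_congr' fun w => imp_congr_right fun hw => and_iff_right (by rintro rfl; exact hpred hw)

theorem sum_powerset_neg_one_pow_card_mul_card_runStarts (hn : 3 ≤ n) :
    ∑ S ∈ (univ : Finset (Fin n)).powerset, (-1 : ℤ) ^ #S * #(runStarts S) = 0 := by
  have hcard : ∀ S : Finset (Fin n),
      (#(runStarts S) : ℤ) = ∑ v, if v ∈ runStarts S then 1 else 0 := by
    intro S
    rw [sum_boole, filter_mem_eq_inter, univ_inter]
  simp_rw [hcard, mul_sum]
  rw [sum_comm]
  refine sum_eq_zero fun v _ => ?_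
  obtain ⟨a, hav, hpred⟩ : ∃ a : Fin n, a ≠ v ∧ (a : ℕ) + 1 ≠ v := by
    by_cases hv : 2 ≤ (v : ℕ)
    · exact ⟨⟨0, by omega⟩, Fin.ne_of_val_ne (by simp only; omega), by simp only; omega⟩
    · exact ⟨⟨2, hn⟩, Fin.ne_of_val_ne (by simp only; omega), by simp only; omega⟩
  exact sum_powerset_neg_one_pow_card_mul_eq_zero (mem_univ a) fun t _ => by
    simp only [mem_runStarts_insert_iff hav hpred]

theorem runStarts_empty : runStarts (∅ : Finset (Fin n)) = ∅ := filter_empty _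

theorem card_runStarts_univ (hn : 0 < n) : #(runStarts (univ : Finset (Fin n))) = 1 := by
  rw [card_eq_one]
  refine ⟨⟨0, hn⟩, ?_⟩
  ext v
  simp only [runStarts, mem_filter, mem_univ, true_and, mem_singleton, not_true_eq_false,
    imp_false]
  constructor
  · intro h
    by_contra hv
    exact h ⟨v - 1, by omega⟩ (by rw [Fin.ext_iff] at hv; simp only at hv ⊢; omega)
  · rintro rfl w
    simp only
    omega

end PathGraph

/-- For the path graph `P_n` on `n ≥ 3` vertices, the invariant
`ρ(P_n) = Σ_{i=1}^{n-1} (-1)^i Σ_{|S| = i} H₀(P_n[S])` equals `(-1)^(n-1)`. -/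
theorem rho_pathGraph (n : ℕ) (hn : 3 ≤ n) :
    ∑ i ∈ Finset.Icc 1 (n - 1), (-1 : ℤ) ^ i *
      ∑ S ∈ Finset.powersetCard i (Finset.univ : Finset (Fin n)),
        (H0 (SimpleGraph.pathGraph n) (↑S : Set (Fin n)) : ℤ)
    = (-1 : ℤ) ^ (n - 1) := by
  have hsplit := sum_Icc_neg_one_pow_mul_sum_powersetCard (univ : Finset (Fin n))
    (univ_nonempty_iff.2 ⟨⟨0, by omega⟩⟩) fun S => (#(runStarts S) : ℤ)
  rw [card_fin] at hsplit
  simp only [H0_pathGraph_eq_card_runStarts]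
  rw [hsplit, sum_powerset_neg_one_pow_card_mul_card_runStarts hn, runStarts_empty, card_empty,
    card_runStarts_univ (by omega)]
  obtain ⟨k, rfl⟩ : ∃ k, n = k + 1 := ⟨n - 1, by omega⟩
  rw [Nat.add_sub_cancel, pow_succ]
  ring
end

section
/- Let n ≥ 3 and let C_n be the cycle graph on vertex set {0,…,n−1} (i adjacent to j iff j ≡ i ± 1 mod n). Then ρ(C_n) := Σ_{i=1}^{n−1} (−1)^i Σ_{S ⊆ {0,…,n−1}, |S| = i} H₀(C_n[S]) = 0. -/
open Finset Function

noncomputable def SimpleGraph.connectedComponentEquivOfFibers {V β : Type*} {G : SimpleGraph V}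
    (r : V → β) (hsurj : Surjective r) (hadj : ∀ u v, G.Adj u v → r u = r v)
    (hfiber : ∀ u v, r u = r v → G.Reachable u v) : G.ConnectedComponent ≃ β := by
  have hwalk : ∀ u v (_ : G.Walk u v), r u = r v := by
    intro u v p
    induction p with
    | nil => rfl
    | cons h _ ih => exact (hadj _ _ h).trans ih
  refine .ofBijective (SimpleGraph.ConnectedComponent.lift r fun u v p _ ↦ hwalk u v p) ⟨?_, ?_⟩
  · rintro ⟨u⟩ ⟨v⟩ h
    exact SimpleGraph.ConnectedComponent.sound (hfiber u v h)
  · intro b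
    obtain ⟨v, rfl⟩ := hsurj b
    exact ⟨G.connectedComponentMk v, rfl⟩

namespace Function

open scoped Classical

variable {α : Type*} {s : α → α} {S : Set α} (hS : ∀ v, ∃ k, s^[k] v ∉ S) {v : α}

noncomputable def exitTime (v : α) : ℕ := Nat.find (hS v)

noncomputable def runEnd (v : α) : α := s^[exitTime hS v - 1] v

lemma iterate_mem_of_lt_exitTime {j : ℕ} (hj : j < exitTime hS v) : s^[j] v ∈ S :=
  not_not.mp (Nat.find_min (hS v) hj)

lemma exitTime_pos (hv : v ∈ S) : 0 < exitTime hS v :=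
  Nat.pos_of_ne_zero fun h ↦ Nat.find_eq_zero (hS v) |>.mp h hv

lemma exitTime_eq_succ (hv : v ∈ S) : exitTime hS v = exitTime hS (s v) + 1 :=
  Nat.find_comp_succ (hS v) (by simpa only [iterate_succ_apply] using hS (s v)) (not_not.mpr hv)

lemma runEnd_mem (hv : v ∈ S) : runEnd hS v ∈ S :=
  iterate_mem_of_lt_exitTime hS (Nat.sub_lt (exitTime_pos hS hv) one_pos)

lemma apply_runEnd_notMem (hv : v ∈ S) : s (runEnd hS v) ∉ S := by
  rw [runEnd, ← iterate_succ_apply' s, Nat.succ_eq_add_one,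
    Nat.sub_add_cancel (exitTime_pos hS hv)]
  exact Nat.find_spec (hS v)

lemma runEnd_eq_self (hv : v ∈ S) (hsv : s v ∉ S) : runEnd hS v = v := by
  have : exitTime hS v = 1 := (Nat.find_eq_iff (hS v)).mpr ⟨hsv, by simpa using hv⟩
  simp [runEnd, this]

lemma runEnd_apply (hv : v ∈ S) (hsv : s v ∈ S) : runEnd hS (s v) = runEnd hS v := by
  rw [runEnd, runEnd, exitTime_eq_succ hS hv, Nat.add_sub_cancel, ← iterate_succ_apply,
    Nat.succ_eq_add_one, Nat.sub_add_cancel (exitTime_pos hS hsv)]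

lemma reachable_runEnd {G : SimpleGraph α} (hG : ∀ u, G.Adj u (s u)) (hv : v ∈ S) :
    (G.induce S).Reachable ⟨v, hv⟩ ⟨runEnd hS v, runEnd_mem hS hv⟩ := by
  suffices h : ∀ j (hj : j < exitTime hS v),
      (G.induce S).Reachable ⟨v, hv⟩ ⟨s^[j] v, iterate_mem_of_lt_exitTime hS hj⟩ from
    h _ (Nat.sub_lt (exitTime_pos hS hv) one_pos)
  intro j hj
  induction j with
  | zero => rfl
  | succ j ih =>
    refine (ih (Nat.lt_of_succ_lt hj)).trans (SimpleGraph.Adj.reachable ?_)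
    simpa [iterate_succ_apply'] using hG (s^[j] v)

end Function

namespace SimpleGraph

noncomputable def induceConnectedComponentEquivRunEnds {α : Type*} {s : α → α} {S : Set α}
    (hS : ∀ v, ∃ k, s^[k] v ∉ S) {G : SimpleGraph α} (hG : ∀ u v, G.Adj u v ↔ s u = v ∨ s v = u) :
    (G.induce S).ConnectedComponent ≃ {v // v ∈ S ∧ s v ∉ S} := by
  refine connectedComponentEquivOfFibers
    (fun v ↦ ⟨runEnd hS v, runEnd_mem hS v.2, apply_runEnd_notMem hS v.2⟩) ?_ ?_ ?_
  · rintro ⟨b, hb, hsb⟩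
    exact ⟨⟨b, hb⟩, Subtype.ext (runEnd_eq_self hS hb hsb)⟩
  · rintro ⟨u, hu⟩ ⟨v, hv⟩ huv
    rcases (hG u v).mp huv with rfl | rfl
    · exact Subtype.ext (runEnd_apply hS hu hv).symm
    · exact Subtype.ext (runEnd_apply hS hv hu)
  · rintro ⟨u, hu⟩ ⟨v, hv⟩ huv
    have hGs : ∀ u, G.Adj u (s u) := fun u ↦ (hG u _).mpr (.inl rfl)
    have hend : runEnd hS u = runEnd hS v := congrArg Subtype.val huv
    replace hend : (⟨runEnd hS u, runEnd_mem hS hu⟩ : S) = ⟨runEnd hS v, runEnd_mem hS hv⟩ :=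
      Subtype.ext hend
    exact (reachable_runEnd hS hGs hu).trans (hend ▸ (reachable_runEnd hS hGs hv).symm)

end SimpleGraph

lemma Finset.card_filter_powersetCard_mem_notMem {ι : Type*} [Fintype ι] [DecidableEq ι]
    {a b : ι} (hab : a ≠ b) (k : ℕ) :
    #{S ∈ powersetCard (k + 1) (univ : Finset ι) | a ∈ S ∧ b ∉ S}
      = (Fintype.card ι - 2).choose k := by
  have h : {S ∈ powersetCard (k + 1) (univ : Finset ι) | a ∈ S ∧ b ∉ S}
      = {S ∈ powersetCard (k + 1) (univ.erase b) | {a} ⊆ S} := by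
    ext S
    simp only [mem_filter, mem_powersetCard, subset_erase, singleton_subset_iff,
      subset_univ, true_and]
    tauto
  rw [h, card_filter_powersetCard_subset _ _ _ (by simpa using hab) (by simp)]
  simp [card_erase_of_mem, Nat.sub_sub]

open Fin.NatCast in
lemma Fin.exists_iterate_add_one_notMem {n : ℕ} {S : Set (Fin (n + 2))} {w : Fin (n + 2)}
    (hw : w ∉ S) (v : Fin (n + 2)) : ∃ k, (· + 1)^[k] v ∉ S :=
  ⟨(w - v).val, by rwa [add_right_iterate_apply, nsmul_one, Fin.cast_val_eq_self, add_sub_cancel]⟩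

namespace SimpleGraph

lemma cycleGraph_adj_iff_add_one {n : ℕ} {u v : Fin (n + 2)} :
    (cycleGraph (n + 2)).Adj u v ↔ u + 1 = v ∨ v + 1 = u := by
  rw [cycleGraph_adj, sub_eq_iff_eq_add, sub_eq_iff_eq_add, add_comm 1, add_comm 1, eq_comm,
    @eq_comm _ v, or_comm]

lemma H0_cycleGraph {n : ℕ} {S : Finset (Fin (n + 2))} (hS : S ≠ univ) :
    H0 (cycleGraph (n + 2)) S = #{v | v ∈ S ∧ v + 1 ∉ S} := by
  obtain ⟨w, hw⟩ : ∃ w, w ∉ S := by simpa [eq_univ_iff_forall] using hS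
  have e := induceConnectedComponentEquivRunEnds
    (Fin.exists_iterate_add_one_notMem (S := (S : Set (Fin (n + 2)))) (mod_cast hw))
    fun _ _ ↦ cycleGraph_adj_iff_add_one
  rw [H0, Nat.card_congr e, Nat.card_eq_fintype_card, Fintype.card_subtype]
  simp

lemma sum_H0_cycleGraph_powersetCard {n k : ℕ} (hk : k ≤ n) :
    ∑ S ∈ powersetCard (k + 1) (univ : Finset (Fin (n + 2))), H0 (cycleGraph (n + 2)) S
      = (n + 2) * n.choose k := by
  calc _ = ∑ S ∈ powersetCard (k + 1) (univ : Finset (Fin (n + 2))),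
          #{v | v ∈ S ∧ v + 1 ∉ S} := by
        refine sum_congr rfl fun S hS ↦ H0_cycleGraph ?_
        rintro rfl
        rw [mem_powersetCard_univ, card_univ, Fintype.card_fin] at hS
        omega
    _ = ∑ v : Fin (n + 2), #{S ∈ powersetCard (k + 1) univ | v ∈ S ∧ v + 1 ∉ S} :=
        sum_card_bipartiteAbove_eq_sum_card_bipartiteBelow _
    _ = (n + 2) * n.choose k := by
        simp [card_filter_powersetCard_mem_notMem]

end SimpleGraph

/-- For the cycle graph `C_n` on `n ≥ 3` vertices, the invariant
`ρ(C_n) = Σ_{i=1}^{n-1} (-1)^i Σ_{|S| = i} H₀(C_n[S])` vanishes. -/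
theorem rho_cycleGraph (n : ℕ) (hn : 3 ≤ n) :
    ∑ i ∈ Finset.Icc 1 (n - 1), (-1 : ℤ) ^ i *
      ∑ S ∈ Finset.powersetCard i (Finset.univ : Finset (Fin n)),
        (H0 (SimpleGraph.cycleGraph n) (↑S : Set (Fin n)) : ℤ)
    = 0 := by
  obtain ⟨m, rfl⟩ : ∃ m, n = m + 1 + 2 := ⟨n - 3, by omega⟩
  rw [show m + 1 + 2 - 1 = m + 2 by rfl, ← Ico_add_one_right_eq_Icc, ← zero_add 1,
    ← sum_Ico_add', ← range_eq_Ico]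
  calc _ = ∑ k ∈ range (m + 2), (-1 : ℤ) ^ (k + 1) * ((m + 3) * (m + 1).choose k) := by
        refine sum_congr rfl fun k hk ↦ ?_
        rw [← Nat.cast_sum, SimpleGraph.sum_H0_cycleGraph_powersetCard (by simpa [Nat.lt_succ_iff] using hk)]
        push_cast
        ring
    _ = -(m + 3) * ∑ k ∈ range (m + 1 + 1), (-1 : ℤ) ^ k * (m + 1).choose k := by
        rw [mul_sum]
        exact sum_congr rfl fun k _ ↦ by ring
    _ = 0 := by rw [Int.alternating_sum_range_choose_of_ne m.succ_ne_zero, mul_zero]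
end

section
/- Let n ≥ 3 and let C_n be the cycle graph on vertex set Fin n. Define J : Finset (Fin n) → ℤ by J(S) = H₀(C_n[S]) (the number of connected components of the induced subgraph) when S is a proper subset of the full vertex set, and J(univ) = 2. Then the alternating sum over all nonempty subsets satisfies Σ_{S ⊆ Fin n, S ≠ ∅} (−1)^{|S|−1} J(S) = 2·(−1)^{n−1}. (This is the connectivity count C^N of a simple annular collection of N = n subsystems: each proper union of consecutive subsystems is a disjoint union of arcs with one boundary component per arc, while the full annulus has two boundary components.) -/
/-- The boundary-component count `J` for an annular collection of `n` subsystems: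
for a proper subset `S` of the cycle `C_n` it is the number of connected components
of the induced subgraph (one boundary per arc), while the full annulus has two
boundary components. -/
noncomputable def Jcount (n : ℕ) (S : Finset (Fin n)) : ℤ :=
  if S = (Finset.univ : Finset (Fin n)) then 2
  else (H0 (SimpleGraph.cycleGraph n) (↑S : Set (Fin n)) : ℤ)

/-!
Walking along the cycle from a vertex of a proper subset `S`, one stays in `S` until the last
vertex `e` of the current arc, where `e + 1 ∉ S`. This "arc end" is constant along the edges of
`C_n[S]` and every vertex reaches its own arc end, so the components of `C_n[S]` correspond to the
vertices `i ∈ S` with `i + 1 ∉ S`. Writing this count as `∑ i, [i ∈ S ∧ i + 1 ∉ S]` and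
exchanging sums, each `i` contributes the signed count of the sets with `i ∈ S`, `i + 1 ∉ S`,
which vanishes since toggling a third vertex is a sign-reversing involution (this needs `n ≥ 3`).
Only the term `S = univ`, where `J` is `2` rather than `0`, survives.
-/

open Finset

namespace SimpleGraph

variable {V : Type*}

lemma card_connectedComponent_eq_card_range {β : Type*} {G : SimpleGraph V} {f : V → β}
    (hf : ∀ u v, G.Reachable u v ↔ f u = f v) :
    Nat.card G.ConnectedComponent = Nat.card (Set.range f) := by
  refine Nat.card_eq_of_bijective
    (ConnectedComponent.lift (fun v => (⟨f v, v, rfl⟩ : Set.range f))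
      fun u v p _ => Subtype.ext ((hf u v).1 p.reachable)) ⟨?_, ?_⟩
  · refine ConnectedComponent.ind₂ fun u v h => ?_
    exact ConnectedComponent.sound ((hf u v).2 (congrArg Subtype.val h))
  · rintro ⟨_, v, rfl⟩
    exact ⟨G.connectedComponentMk v, rfl⟩

def functionalGraph (s : V → V) : SimpleGraph V :=
  fromRel fun u v => v = s u

lemma functionalGraph_adj {s : V → V} {u v : V} :
    (functionalGraph s).Adj u v ↔ u ≠ v ∧ (v = s u ∨ u = s v) :=
  fromRel_adj _ _ _

section RunEnd

variable {s : V → V} {S : Set V} (hS : ∀ v, ∃ t, s^[t] v ∉ S)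

open Classical in
noncomputable def runLength (v : V) : ℕ := Nat.find (hS (s v))

/-- For `v ∈ S`, the last point of the run `v, s v, s² v, …` before it first leaves `S`. -/
noncomputable def runEnd (v : V) : V := s^[runLength hS v] v

lemma succ_runEnd_notMem (v : V) : s (runEnd hS v) ∉ S := by
  classical
  have := Nat.find_spec (hS (s v))
  rwa [← Function.iterate_succ_apply, Function.iterate_succ_apply'] at this

lemma runEnd_of_succ_notMem {v : V} (h : s v ∉ S) : runEnd hS v = v := by
  classical
  have : runLength hS v = 0 := Nat.find_eq_zero _ |>.2 h
  rw [runEnd, this, Function.iterate_zero_apply]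

lemma runLength_of_succ_mem {v : V} (h : s v ∈ S) :
    runLength hS v = runLength hS (s v) + 1 := by
  classical
  exact Nat.find_comp_succ _ _ (not_not.2 h)

lemma runEnd_of_succ_mem {v : V} (h : s v ∈ S) : runEnd hS v = runEnd hS (s v) := by
  rw [runEnd, runLength_of_succ_mem hS h]
  rfl

lemma runEnd_mem {v : V} (hv : v ∈ S) : runEnd hS v ∈ S := by
  classical
  cases h : runLength hS v with
  | zero => rwa [runEnd, h]
  | succ k =>
    have hk : k < runLength hS v := by omega
    have := Nat.find_min (hS (s v)) hk
    rwa [not_not, ← Function.iterate_succ_apply, Nat.succ_eq_add_one, ← h] at this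

lemma reachable_runEnd (v : S) :
    ((functionalGraph s).induce S).Reachable v ⟨runEnd hS v, runEnd_mem hS v.2⟩ := by
  induction h : runLength hS v using Nat.strong_induction_on generalizing v with
  | _ k ih =>
  by_cases hsv : s v ∈ S
  · have hlt : runLength hS (s v) < k := by
      rw [← h, runLength_of_succ_mem hS hsv]
      exact Nat.lt_succ_self _
    have hadj : ((functionalGraph s).induce S).Adj v ⟨s v, hsv⟩ := by
      refine show (functionalGraph s).Adj v.1 (s v.1) from
        functionalGraph_adj.2 ⟨fun hfix => ?_, Or.inl rfl⟩
      rw [← hfix, h] at hlt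
      exact hlt.false
    convert hadj.reachable.trans (ih _ hlt ⟨s v, hsv⟩ rfl) using 2
    exact runEnd_of_succ_mem hS hsv
  · convert Reachable.refl v using 2
    exact runEnd_of_succ_notMem hS hsv

lemma runEnd_eq_of_adj {u v : S} (h : ((functionalGraph s).induce S).Adj u v) :
    runEnd hS u = runEnd hS v := by
  rcases (functionalGraph_adj.1 (show (functionalGraph s).Adj u.1 v.1 from h)).2 with hv | hu
  · rw [runEnd_of_succ_mem hS (hv ▸ v.2), hv]
  · rw [hu]
    exact (runEnd_of_succ_mem hS (hu ▸ u.2)).symm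

lemma reachable_induce_functionalGraph_iff (u v : S) :
    ((functionalGraph s).induce S).Reachable u v ↔ runEnd hS u = runEnd hS v := by
  refine ⟨fun h => ?_, fun h => ?_⟩
  · rw [reachable_iff_reflTransGen] at h
    induction h with
    | refl => rfl
    | tail _ hadj ih => exact ih.trans (runEnd_eq_of_adj hS hadj)
  · refine (reachable_runEnd hS u).trans ?_
    convert (reachable_runEnd hS v).symm using 2

lemma range_runEnd :
    Set.range (fun v : S => runEnd hS v) = {v | v ∈ S ∧ s v ∉ S} := by
  ext w
  constructor
  · rintro ⟨v, rfl⟩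
    exact ⟨runEnd_mem hS v.2, succ_runEnd_notMem hS v⟩
  · rintro ⟨hw, hsw⟩
    exact ⟨⟨w, hw⟩, runEnd_of_succ_notMem hS hsw⟩

theorem card_connectedComponent_induce_functionalGraph (hS : ∀ v, ∃ t, s^[t] v ∉ S) :
    Nat.card ((functionalGraph s).induce S).ConnectedComponent =
      Nat.card {v | v ∈ S ∧ s v ∉ S} := by
  rw [card_connectedComponent_eq_card_range (reachable_induce_functionalGraph_iff hS),
    range_runEnd]

end RunEnd

lemma cycleGraph_eq_functionalGraph {n : ℕ} [NeZero n] :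
    cycleGraph n = functionalGraph (· + 1 : Fin n → Fin n) := by
  rcases n with _ | _ | m
  · exact absurd rfl (NeZero.ne 0)
  · ext u v
    simp [cycleGraph, Subsingleton.elim (α := Fin 1) u v]
  · ext u v
    have hne (w : Fin (m + 2)) : w + 1 ≠ w := fun h => one_ne_zero (add_eq_left.1 h)
    rw [functionalGraph_adj, cycleGraph_adj, sub_eq_iff_eq_add', sub_eq_iff_eq_add']
    constructor
    · rintro (rfl | rfl)
      exacts [⟨hne v, Or.inr rfl⟩, ⟨(hne u).symm, Or.inl rfl⟩]
    · rintro ⟨-, h⟩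
      exact h.symm

end SimpleGraph

lemma H0_cycleGraph_of_ne_univ {n : ℕ} [NeZero n] {S : Finset (Fin n)} (hS : S ≠ univ) :
    H0 (SimpleGraph.cycleGraph n) S = #{i ∈ S | i + 1 ∉ S} := by
  obtain ⟨z, hz⟩ := not_forall.1 (mt eq_univ_iff_forall.2 hS)
  have hexit (v : Fin n) : ∃ t, (· + 1)^[t] v ∉ (S : Set (Fin n)) :=
    ⟨(z - v).val, by
      open Fin.CommRing in
      rwa [add_right_iterate_apply, nsmul_one, Fin.cast_val_eq_self, add_sub_cancel]⟩
  rw [H0, SimpleGraph.cycleGraph_eq_functionalGraph,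
    SimpleGraph.card_connectedComponent_induce_functionalGraph hexit]
  simp only [mem_coe, ← coe_filter, Nat.card_coe_set_eq, Set.ncard_coe_finset]

section AlternatingSums

variable {α : Type*} [Fintype α] [DecidableEq α]

lemma sum_neg_one_pow_card_of_mem_of_notMem {a b c : α} (hca : c ≠ a) (hcb : c ≠ b) :
    ∑ S : Finset α with a ∈ S ∧ b ∉ S, (-1 : ℤ) ^ #S = 0 := by
  refine sum_involution (fun S _ => if c ∈ S then S.erase c else insert c S) ?_ ?_ ?_ ?_
  · intro S _
    split_ifs with hc
    · rw [← card_erase_add_one hc, pow_succ]; ring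
    · rw [card_insert_of_notMem hc, pow_succ]; ring
  · intro S _ _
    split_ifs with hc
    · exact fun h => notMem_erase c S ((Finset.ext_iff.1 h c).2 hc)
    · exact fun h => hc ((Finset.ext_iff.1 h c).1 (mem_insert_self c S))
  · intro S hS
    simp only [mem_filter, mem_univ, true_and] at hS ⊢
    split_ifs <;> simp [hS, hca.symm, hcb.symm]
  · intro S _
    by_cases hc : c ∈ S <;> simp [hc]

lemma sum_neg_one_pow_card_mul_card_filter_notMem (s : α → α)
    (h : ∀ a, ∃ c, c ≠ a ∧ c ≠ s a) :
    ∑ S : Finset α, (-1 : ℤ) ^ #S * #{a ∈ S | s a ∉ S} = 0 := calc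
  _ = ∑ S : Finset α, ∑ a ∈ S with s a ∉ S, (-1 : ℤ) ^ #S := by
    simp only [sum_const, nsmul_eq_mul, mul_comm]
  _ = ∑ a, ∑ S : Finset α with a ∈ S ∧ s a ∉ S, (-1 : ℤ) ^ #S :=
    sum_comm' fun S a => by simp
  _ = 0 := sum_eq_zero fun a _ => by
    obtain ⟨c, hca, hcs⟩ := h a
    exact sum_neg_one_pow_card_of_mem_of_notMem hca hcs

end AlternatingSums

lemma Fin.exists_ne_and_ne_add_one {n : ℕ} [NeZero n] (hn : 3 ≤ n) (a : Fin n) :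
    ∃ c, c ≠ a ∧ c ≠ a + 1 := by
  obtain ⟨c, -, hc⟩ := exists_mem_notMem_of_card_lt_card
    (card_le_two.trans_lt (by simp; omega) : #{a, a + 1} < #(univ : Finset (Fin n)))
  exact ⟨c, by simpa [not_or] using hc⟩

/-- The connectivity count `C^N` of a simple annular collection of `N = n ≥ 3`
subsystems: `Σ_{S ≠ ∅} (-1)^(|S|-1) J(S) = 2 (-1)^(n-1)`. -/
theorem connectivity_count_annular (n : ℕ) (hn : 3 ≤ n) :
    ∑ S ∈ (Finset.univ : Finset (Fin n)).powerset.filter (· ≠ ∅),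
      (-1 : ℤ) ^ (S.card - 1) * Jcount n S
    = 2 * (-1 : ℤ) ^ (n - 1) := by
  have : NeZero n := ⟨by omega⟩
  set P := (univ : Finset (Fin n)).powerset.filter (· ≠ ∅)
  have hproper : ∑ S ∈ P.erase univ, (-1 : ℤ) ^ (#S - 1) * Jcount n S = 0 := calc
    _ = ∑ S ∈ P.erase univ, -((-1 : ℤ) ^ #S * #{i ∈ S | i + 1 ∉ S}) := by
      refine sum_congr rfl fun S hS => ?_
      obtain ⟨hSu, hS⟩ := mem_erase.1 hS
      obtain ⟨k, hk⟩ :=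
        Nat.exists_eq_add_one.2 (card_pos.2 (nonempty_of_ne_empty (mem_filter.1 hS).2))
      rw [Jcount, if_neg hSu, H0_cycleGraph_of_ne_univ hSu, hk, pow_succ]
      simp
    _ = ∑ S : Finset (Fin n), -((-1 : ℤ) ^ #S * #{i ∈ S | i + 1 ∉ S}) := by
      refine sum_subset (subset_univ _) fun S _ hS => ?_
      by_cases hSu : S = univ
      · simp [hSu]
      · simp [show S = ∅ by simpa [P, hSu] using hS]
    _ = 0 := by
      rw [sum_neg_distrib, sum_neg_one_pow_card_mul_card_filter_notMem _
        (Fin.exists_ne_and_ne_add_one hn), neg_zero]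
  have huniv : univ ∈ P := mem_filter.2 ⟨mem_powerset_self _, univ_nonempty.ne_empty⟩
  rw [← sum_erase_add _ _ huniv, hproper, Jcount, if_pos rfl, card_univ, Fintype.card_fin]
  ring
end

section
/- Let ι be a type, s a nonempty finite subset of ι, and a ∈ ι with a ∉ s. Let f : Finset ι → ℝ satisfy f(insert a Q) = f({a}) + f(Q) for every nonempty Q ⊆ s (additivity of the boundary count over the disjoint piece a). Then the alternating sum over all nonempty subsets of insert a s vanishes: Σ_{Q ⊆ insert a s, Q ≠ ∅} (−1)^{|Q|−1} f(Q) = 0. (A collection of subsystems consisting of an arbitrary structure together with a disjoint isolated subsystem has vanishing connectivity count C^N, hence vanishing N-partite information.) -/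
/-!
Extend `f` by zero at `∅`; the extension `g` then satisfies `g (insert a Q) = f {a} + g Q` for
*every* `Q ⊆ s`, including `Q = ∅`, and the connectivity sum over `insert a s` is
`-∑_{Q ⊆ insert a s} (-1)^|Q| g Q`. Splitting the subsets of `insert a s` according to whether
they contain `a`, the `g Q` terms cancel in pairs and what remains is
`f {a} · ∑_{Q ⊆ s} (-1)^|Q|`, which vanishes because `s` is nonempty.
-/

open Finset

namespace Finset

variable {ι R : Type*} [CommRing R]

lemma sum_powerset_neg_one_pow_card_of_nonempty' {s : Finset ι} (hs : s.Nonempty) :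
    ∑ Q ∈ s.powerset, (-1 : R) ^ #Q = 0 := by
  exact_mod_cast congrArg (Int.cast : ℤ → R) (sum_powerset_neg_one_pow_card_of_nonempty hs)

lemma sum_powerset_insert_neg_one_pow_card_mul_eq_zero [DecidableEq ι] {s : Finset ι}
    (hs : s.Nonempty) {a : ι} (ha : a ∉ s) {g : Finset ι → R} (c : R)
    (hg : ∀ Q ⊆ s, g (insert a Q) = c + g Q) :
    ∑ Q ∈ (insert a s).powerset, (-1 : R) ^ #Q * g Q = 0 := by
  have hcard : ∀ Q ∈ s.powerset, #(insert a Q) = #Q + 1 := fun Q hQ ↦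
    card_insert_of_notMem fun haQ ↦ ha (mem_powerset.1 hQ haQ)
  calc ∑ Q ∈ (insert a s).powerset, (-1 : R) ^ #Q * g Q
      = ∑ Q ∈ s.powerset, ((-1 : R) ^ #Q * g Q + (-1) ^ (#Q + 1) * (c + g Q)) := by
        rw [sum_powerset_insert ha, ← sum_add_distrib]
        refine sum_congr rfl fun Q hQ ↦ ?_
        rw [hcard Q hQ, hg Q (mem_powerset.1 hQ)]
    _ = -c * ∑ Q ∈ s.powerset, (-1 : R) ^ #Q := by
        rw [mul_sum]
        refine sum_congr rfl fun Q _ ↦ ?_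
        ring
    _ = 0 := by rw [sum_powerset_neg_one_pow_card_of_nonempty' hs, mul_zero]

lemma sum_filter_nonempty_neg_one_pow_card_sub_one_mul [DecidableEq ι] (t : Finset ι)
    (f : Finset ι → R) :
    ∑ Q ∈ t.powerset.filter (· ≠ ∅), (-1 : R) ^ (#Q - 1) * f Q =
      -∑ Q ∈ t.powerset, (-1 : R) ^ #Q * if Q = ∅ then 0 else f Q := by
  rw [sum_filter, ← sum_neg_distrib]
  refine sum_congr rfl fun Q _ ↦ ?_
  rcases Q.eq_empty_or_nonempty with rfl | hQ
  · simp
  · obtain ⟨n, hn⟩ := Nat.exists_eq_add_one_of_ne_zero (card_ne_zero.2 hQ)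
    rw [if_pos hQ.ne_empty, if_neg hQ.ne_empty, hn, Nat.add_sub_cancel, pow_succ]
    ring

end Finset

/-- A collection of subsystems consisting of an arbitrary structure `s` together
with a disjoint isolated subsystem `a` (so that the boundary count `f` is additive
over the disjoint piece `a`) has vanishing connectivity count:
`Σ_{Q ⊆ insert a s, Q ≠ ∅} (-1)^(|Q|-1) f(Q) = 0`. -/
theorem connectivity_count_isolated_island
    {ι : Type*} [DecidableEq ι] (s : Finset ι) (hs : s.Nonempty)
    (a : ι) (ha : a ∉ s) (f : Finset ι → ℝ)
    (hf : ∀ Q ⊆ s, Q.Nonempty → f (insert a Q) = f {a} + f Q) :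
    ∑ Q ∈ (insert a s).powerset.filter (· ≠ ∅),
      (-1 : ℝ) ^ (Q.card - 1) * f Q = 0 := by
  rw [sum_filter_nonempty_neg_one_pow_card_sub_one_mul, neg_eq_zero]
  refine sum_powerset_insert_neg_one_pow_card_mul_eq_zero hs ha (f {a}) fun Q hQ ↦ ?_
  rcases Q.eq_empty_or_nonempty with rfl | hQne
  · simp
  · simp [hQne.ne_empty, hf Q hQ hQne]
end

section
/- Let ι be a type, s a finite subset of ι with |s| ≥ 3, let J : Finset ι → ℝ, let p₁,…,p_k be two-element subsets of s, and let ν₁,…,ν_k ∈ ℝ. Define J′(Q) := J(Q) + Σ_{j : p_j ⊆ Q} ν_j. Then Σ_{Q ⊆ s, Q ≠ ∅} (−1)^{|Q|−1} J′(Q) = Σ_{Q ⊆ s, Q ≠ ∅} (−1)^{|Q|−1} J(Q); equivalently Σ_{Q ⊆ s, Q ≠ ∅} (−1)^{|Q|−1} Σ_{j : p_j ⊆ Q} ν_j = 0. (Adding any number of handles between pairs of subsystems—in particular between nearest neighbours of an annular arrangement—leaves the connectivity count C^N, and hence the N-partite information, invariant.) -/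
/-!
A handle `ν` on a pair `p` contributes `ν` to exactly the subsets `Q` with `p ⊆ Q ⊆ s`, so
its share of the alternating sum is `ν` times `∑_{p ⊆ Q ⊆ s} (-1)^(|Q|-1)`. Writing
`Q = p ∪ R` with `R ⊆ s \ p`, this is `±∑_{R ⊆ s \ p} (-1)^|R|`, which vanishes because
`s \ p` is nonempty as soon as `|s| > 2`. The alternating sum is linear in the function, so
all handles together contribute nothing.
-/

open Finset

namespace Finset

variable {α R : Type*} [DecidableEq α] [CommRing R]

theorem sum_Icc_neg_one_pow_card_of_ssubset {p s : Finset α} (h : p ⊂ s) :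
    ∑ Q ∈ Icc p s, (-1 : R) ^ #Q = 0 := by
  have hinj : Set.InjOn (p ∪ ·) ((s \ p).powerset : Set (Finset α)) := fun A hA B hB hAB => by
    simp only [coe_powerset, Set.mem_preimage, Set.mem_powerset_iff, coe_subset,
      subset_sdiff] at hA hB
    rw [← union_sdiff_cancel_left hA.2.symm, ← union_sdiff_cancel_left hB.2.symm]
    exact congrArg (· \ p) hAB
  have hpow : ∑ A ∈ (s \ p).powerset, (-1 : R) ^ #A = 0 := by
    simpa using congrArg (Int.cast : ℤ → R)
      (sum_powerset_neg_one_pow_card_of_nonempty (sdiff_nonempty.mpr h.not_subset))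
  rw [Icc_eq_image_powerset h.subset, sum_image hinj]
  calc ∑ A ∈ (s \ p).powerset, (-1 : R) ^ #(p ∪ A)
      = ∑ A ∈ (s \ p).powerset, (-1 : R) ^ #p * (-1) ^ #A :=
        sum_congr rfl fun A hA => by
          rw [card_union_of_disjoint (subset_sdiff.mp (mem_powerset.mp hA)).2.symm, pow_add]
    _ = 0 := by rw [← mul_sum, hpow, mul_zero]

end Finset

section ConnectivitySum

variable {ι R : Type*} [DecidableEq ι] [CommRing R]

def connectivitySum (s : Finset ι) : (Finset ι → R) →ₗ[R] R where
  toFun f := ∑ Q ∈ s.powerset.filter (· ≠ ∅), (-1 : R) ^ (Q.card - 1) * f Q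
  map_add' f g := by simp only [Pi.add_apply, mul_add, sum_add_distrib]
  map_smul' c f := by simp only [Pi.smul_apply, smul_eq_mul, RingHom.id_apply, mul_sum,
    mul_left_comm]

theorem connectivitySum_apply (s : Finset ι) (f : Finset ι → R) :
    connectivitySum s f = ∑ Q ∈ s.powerset.filter (· ≠ ∅), (-1 : R) ^ (Q.card - 1) * f Q :=
  rfl

theorem connectivitySum_superset_indicator {p s : Finset ι} (hp : p.Nonempty) (h : p ⊂ s) :
    connectivitySum s (fun Q => if p ⊆ Q then (1 : R) else 0) = 0 := by
  have hfilter : (s.powerset.filter (· ≠ ∅)).filter (p ⊆ ·) = Icc p s := by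
    ext Q
    simp only [mem_filter, mem_powerset, mem_Icc, ne_eq]
    exact ⟨fun ⟨⟨hQs, _⟩, hpQ⟩ => ⟨hpQ, hQs⟩,
      fun ⟨hpQ, hQs⟩ => ⟨⟨hQs, (hp.mono hpQ).ne_empty⟩, hpQ⟩⟩
  rw [connectivitySum_apply]
  simp only [mul_ite, mul_one, mul_zero]
  rw [← sum_filter, hfilter, ← neg_eq_zero, ← sum_neg_distrib,
    ← sum_Icc_neg_one_pow_card_of_ssubset (R := R) h]
  refine sum_congr rfl fun Q hQ => ?_
  obtain ⟨n, hn⟩ := Nat.exists_eq_add_of_lt (card_pos.mpr (hp.mono (mem_Icc.mp hQ).1))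
  rw [hn, zero_add, Nat.add_sub_cancel, pow_succ, mul_neg_one]

end ConnectivitySum

/-- Adding any number of handles between pairs of subsystems (e.g. between
nearest neighbours of an annular arrangement) leaves the connectivity count
invariant: with two-element subsets `p 1, …, p k` of `s` (`|s| ≥ 3`), handle
counts `ν j`, and `J′(Q) = J(Q) + Σ_{j : p j ⊆ Q} ν j`, the alternating sums of
`J′` and `J` over nonempty subsets of `s` coincide; equivalently the alternating
sum of the handle contribution vanishes. -/
theorem connectivity_count_pair_handles
    {ι : Type*} [DecidableEq ι] (s : Finset ι) (hs : 3 ≤ s.card)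
    (J : Finset ι → ℝ) (k : ℕ) (p : Fin k → Finset ι)
    (hp2 : ∀ j, (p j).card = 2) (hps : ∀ j, p j ⊆ s) (ν : Fin k → ℝ) :
    (∑ Q ∈ s.powerset.filter (· ≠ ∅),
        (-1 : ℝ) ^ (Q.card - 1) *
          (J Q + ∑ j ∈ Finset.univ.filter (fun j => p j ⊆ Q), ν j)
      = ∑ Q ∈ s.powerset.filter (· ≠ ∅), (-1 : ℝ) ^ (Q.card - 1) * J Q) ∧
    (∑ Q ∈ s.powerset.filter (· ≠ ∅),
        (-1 : ℝ) ^ (Q.card - 1) *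
          (∑ j ∈ Finset.univ.filter (fun j => p j ⊆ Q), ν j) = 0) := by
  set H : Finset ι → ℝ := fun Q => ∑ j ∈ Finset.univ.filter (fun j => p j ⊆ Q), ν j
  have hH : H = ∑ j, ν j • fun Q => if p j ⊆ Q then (1 : ℝ) else 0 := by
    funext Q
    simp [H, sum_filter]
  have handles : connectivitySum s H = 0 := by
    rw [hH, map_sum]
    refine sum_eq_zero fun j _ => ?_
    have hpj_nonempty : (p j).Nonempty := card_pos.mp (by rw [hp2 j]; omega)
    have hpj_ssubset : p j ⊂ s := ssubset_of_subset_of_ne (hps j) fun h => by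
      have := hp2 j; rw [h] at this; omega
    rw [map_smul, connectivitySum_superset_indicator hpj_nonempty hpj_ssubset, smul_zero]
  have hsum := map_add (connectivitySum s) J H
  rw [handles, add_zero] at hsum
  exact ⟨hsum, handles⟩
end

section
/- Let ι be a type, s a finite subset of ι with |s| = N ≥ 2, and f : Finset ι → ℝ. For each nonempty Q ⊆ s define the multipartite information functional I_f(Q) := Σ_{P ⊆ Q, P ≠ ∅} (−1)^{|P|−1} f(P). Then I_f(s) = Σ_{μ=1}^{N−2} (−1)^{μ−1} Σ_{R ⊆ s, |R| = N−μ} I_f(R) + (−1)^N ( Σ_{i ∈ s} f({i}) − f(s) ). (Recursion expressing the N-partite information in terms of all lower-order multipartite informations.) -/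
/-!
Möbius inversion on the lattice of subsets of `s` recovers `(-1)^(|s|-1) f(s)` as the alternating
sum `Σ_{R ⊆ s} (-1)^|s \ R| I_f(R)`. Grouping this sum by `μ = |s \ R|`, the layer `μ = 0` is
`I_f(s)`, the layer `μ = N - 1` is `(-1)^(N-1) Σ_i f({i})` because `I_f({i}) = f({i})`, the layer
`μ = N` vanishes because `I_f(∅) = 0`, and the remaining layers form the lower-order sum.
-/

/-- The multipartite information functional: for `f : Finset ι → ℝ` (the
entanglement entropy of the union of the subsystems indexed by a finite set)
and a finite index set `Q`, `I_f(Q) = Σ_{P ⊆ Q, P ≠ ∅} (-1)^(|P|-1) f(P)`. -/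
def multiInfo {ι : Type*} [DecidableEq ι] (f : Finset ι → ℝ) (Q : Finset ι) : ℝ :=
  ∑ P ∈ Q.powerset.filter (· ≠ ∅), (-1 : ℝ) ^ (P.card - 1) * f P

open Finset

section MoebiusInversion

variable {α : Type*} [DecidableEq α]

theorem Finset.sum_powerset_eq_sum_range_sum_powersetCard_sub {M : Type*} [AddCommMonoid M]
    (s : Finset α) (F : ℕ → Finset α → M) :
    ∑ R ∈ s.powerset, F #(s \ R) R
      = ∑ μ ∈ range (#s + 1), ∑ R ∈ powersetCard (#s - μ) s, F μ R := by
  rw [sum_powerset, ← sum_range_reflect]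
  refine sum_congr rfl fun μ hμ => sum_congr (by rw [Nat.add_sub_cancel]) fun R hR => ?_
  rw [mem_powersetCard] at hR
  rw [mem_range] at hμ
  rw [card_sdiff_of_subset hR.1, hR.2]
  congr 1
  omega

theorem Finset.sum_Icc_neg_one_pow_card_sdiff {R : Type*} [Ring R] {P s : Finset α}
    (hP : P ⊆ s) : ∑ Q ∈ Icc P s, (-1 : R) ^ #(s \ Q) = if P = s then 1 else 0 := by
  have complement : ∑ Q ∈ Icc P s, (-1 : R) ^ #(s \ Q) = ∑ T ∈ (s \ P).powerset, (-1 : R) ^ #T := by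
    refine sum_nbij' (s \ ·) (s \ ·) ?_ ?_ ?_ ?_ fun _ _ => rfl
    · intro Q hQ
      exact mem_powerset.2 (sdiff_subset_sdiff le_rfl (mem_Icc.1 hQ).1)
    · intro T hT
      rw [mem_powerset] at hT
      rw [mem_Icc]
      exact ⟨fun x hx => mem_sdiff.2 ⟨hP hx, fun hxT => (mem_sdiff.1 (hT hxT)).2 hx⟩, sdiff_subset⟩
    · intro Q hQ
      exact sdiff_sdiff_eq_self (mem_Icc.1 hQ).2
    · intro T hT
      exact sdiff_sdiff_eq_self ((mem_powerset.1 hT).trans sdiff_subset)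
  have alternating := congrArg (Int.cast : ℤ → R) (sum_powerset_neg_one_pow_card (x := s \ P))
  push_cast at alternating
  rw [complement, alternating]
  exact if_congr (sdiff_eq_empty_iff_subset.trans ⟨subset_antisymm hP, fun h => h ▸ subset_rfl⟩)
    rfl rfl

theorem Finset.sum_powerset_neg_one_pow_card_sdiff_mul_sum_powerset {R : Type*} [CommRing R]
    (g : Finset α → R) (s : Finset α) :
    ∑ Q ∈ s.powerset, (-1 : R) ^ #(s \ Q) * ∑ P ∈ Q.powerset, g P = g s := by
  simp_rw [mul_sum]
  rw [sum_comm' (t' := s.powerset) (s' := fun P => Icc P s)]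
  · rw [sum_eq_single_of_mem s (mem_powerset_self s)]
    · simp [← sum_mul]
    · intro P hP hPs
      rw [← sum_mul, sum_Icc_neg_one_pow_card_sdiff (mem_powerset.1 hP), if_neg hPs, zero_mul]
  · intro Q P
    simp only [mem_powerset, mem_Icc]
    exact ⟨fun h => ⟨⟨h.2, h.1⟩, h.2.trans h.1⟩, fun h => ⟨h.1.2, h.1.1⟩⟩

end MoebiusInversion

section multiInfo

variable {ι : Type*} [DecidableEq ι] (f : Finset ι → ℝ)

theorem multiInfo_eq_sum_powerset (Q : Finset ι) :
    multiInfo f Q = ∑ P ∈ Q.powerset, if P ≠ ∅ then (-1 : ℝ) ^ (#P - 1) * f P else 0 :=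
  sum_filter _ _

@[simp]
theorem multiInfo_empty : multiInfo f ∅ = 0 := by
  simp [multiInfo_eq_sum_powerset]

@[simp]
theorem multiInfo_singleton (i : ι) : multiInfo f {i} = f {i} := by
  rw [multiInfo_eq_sum_powerset, ← insert_empty_eq, sum_powerset_insert (notMem_empty i)]
  simp

theorem sum_powersetCard_one_multiInfo (s : Finset ι) :
    ∑ R ∈ s.powersetCard 1, multiInfo f R = ∑ i ∈ s, f {i} := by
  simp [powersetCard_one]

theorem sum_powerset_neg_one_pow_card_sdiff_mul_multiInfo {s : Finset ι} (hs : s ≠ ∅) :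
    ∑ R ∈ s.powerset, (-1 : ℝ) ^ #(s \ R) * multiInfo f R = (-1 : ℝ) ^ (#s - 1) * f s := by
  simp_rw [multiInfo_eq_sum_powerset]
  rw [sum_powerset_neg_one_pow_card_sdiff_mul_sum_powerset, if_pos hs]

end multiInfo

/-- Recursion expressing the `N`-partite information in terms of all lower-order
multipartite informations:
`I_f(s) = Σ_{μ=1}^{N-2} (-1)^(μ-1) Σ_{R ⊆ s, |R| = N-μ} I_f(R)
          + (-1)^N (Σ_{i ∈ s} f({i}) - f(s))`. -/
theorem multiInfo_recursion {ι : Type*} [DecidableEq ι]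
    (s : Finset ι) (N : ℕ) (hcard : s.card = N) (hN : 2 ≤ N)
    (f : Finset ι → ℝ) :
    multiInfo f s
      = (∑ μ ∈ Finset.Icc 1 (N - 2), (-1 : ℝ) ^ (μ - 1) *
          ∑ R ∈ s.powersetCard (N - μ), multiInfo f R)
        + (-1 : ℝ) ^ N * ((∑ i ∈ s, f {i}) - f s) := by
  obtain ⟨n, rfl⟩ : ∃ n, N = n + 2 := ⟨N - 2, by omega⟩
  have hs : s ≠ ∅ := by rintro rfl; simp at hcard
  have layers := (sum_powerset_eq_sum_range_sum_powersetCard_sub s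
    fun μ R => (-1 : ℝ) ^ μ * multiInfo f R).symm.trans
      (sum_powerset_neg_one_pow_card_sdiff_mul_multiInfo f hs)
  rw [hcard, sum_range_succ, sum_range_succ, sum_range_succ'] at layers
  simp only [← mul_sum, Nat.sub_self, Nat.sub_zero, powersetCard_zero, sum_singleton,
    multiInfo_empty] at layers
  rw [show n + 2 - (n + 1) = 1 by omega, show n + 2 - 1 = n + 1 by omega, ← hcard,
    powersetCard_self, sum_singleton, sum_powersetCard_one_multiInfo, hcard] at layers
  have middle : ∑ μ ∈ Icc 1 (n + 2 - 2), (-1 : ℝ) ^ (μ - 1) *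
        ∑ R ∈ s.powersetCard (n + 2 - μ), multiInfo f R
      = -∑ μ ∈ range n, (-1 : ℝ) ^ (μ + 1) *
        ∑ R ∈ s.powersetCard (n + 2 - (μ + 1)), multiInfo f R := by
    rw [Nat.add_sub_cancel, ← Ico_add_one_right_eq_Icc, sum_Ico_eq_sum_range, Nat.add_sub_cancel,
      ← sum_neg_distrib]
    refine sum_congr rfl fun μ _ => ?_
    rw [add_comm 1 μ, Nat.add_sub_cancel, pow_succ]
    ring
  rw [middle]
  linear_combination layers
end

section
/- Let n ≥ 4 and let G be the simple graph on vertex set Fin n in which the vertices 0,…,n−2 form the cycle graph C_{n−1} (i adjacent to i+1 mod (n−1)) and the vertex n−1 is adjacent exactly to the vertex 0. Define J : Finset (Fin n) → ℤ by J(S) = H₀(G[S]) + (1 if {0,…,n−2} ⊆ S, else 0), where H₀(G[S]) is the number of connected components of the induced subgraph of G on S. Then Σ_{S ⊆ Fin n, S ≠ ∅} (−1)^{|S|−1} J(S) = 0. (A closed annular collection of n−1 subsystems with one appendage subsystem attached has vanishing connectivity count C^N, hence vanishing N-partite information; the indicator term records the extra boundary component of any union that contains the full annulus.) -/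
/-- The graph on `Fin n` in which the vertices `0, …, n-2` form the cycle graph
`C_{n-1}` (`i` adjacent to `i+1 mod (n-1)`), and the vertex `n-1` is adjacent
exactly to the vertex `0`. -/
def annulusWithAppendage (n : ℕ) : SimpleGraph (Fin n) :=
  SimpleGraph.fromRel (fun i j =>
    ((i : ℕ) < n - 1 ∧ (j : ℕ) < n - 1 ∧ ((i : ℕ) + 1) % (n - 1) = (j : ℕ)) ∨
    ((i : ℕ) = n - 1 ∧ (j : ℕ) = 0))

/-! The appendage `n - 1` is a leaf of the graph, attached to `0`. Pairing each `S` with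
`S ∪ {n - 1}`, the indicator term does not change, while `H₀` grows by one exactly when
`0 ∉ S`. The alternating sum therefore collapses to `± ∑_{T ⊆ Fin n \ {0, n - 1}} (-1)^|T|`,
which vanishes because `Fin n \ {0, n - 1}` is nonempty. -/

namespace SimpleGraph

variable {V : Type*} {G : SimpleGraph V}

lemma Walk.apply_eq_of_forall_adj {β : Sort*} {f : V → β} (h : ∀ a b, G.Adj a b → f a = f b)
    {a b : V} (p : G.Walk a b) : f a = f b := by
  induction p with
  | nil => rfl
  | cons hadj _ ih => exact (h _ _ hadj).trans ih

end SimpleGraph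

open SimpleGraph

variable {V : Type*} {G : SimpleGraph V} {S : Set V} {u v : V}

lemma H0_insert_of_isolated [Finite V] (hv : v ∉ S) (hiso : ∀ w ∈ S, ¬G.Adj v w) :
    H0 G (insert v S) = H0 G S + 1 := by
  classical
  let ι := (G.induceHomOfLE (Set.subset_insert v S)).toHom
  let φ : Option (G.induce S).ConnectedComponent → (G.induce (insert v S)).ConnectedComponent :=
    fun o => o.elim ((G.induce _).connectedComponentMk ⟨v, Set.mem_insert v S⟩)
      (ConnectedComponent.map ι)
  let ρ : ↥(insert v S) → Option (G.induce S).ConnectedComponent := fun x =>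
    if h : (x : V) = v then none
    else some ((G.induce S).connectedComponentMk
      ⟨x, (Set.mem_insert_iff.mp x.2).resolve_left h⟩)
  have hρ : ∀ a b, (G.induce (insert v S)).Adj a b → ρ a = ρ b := by
    intro a b (hab : G.Adj a b)
    have hne : ∀ x y : V, y ∈ insert v S → G.Adj x y → x ≠ v := by
      rintro x y (rfl | hy) hxy rfl
      · exact hxy.ne rfl
      · exact hiso _ hy hxy
    simp only [ρ]
    rw [dif_neg (hne _ _ b.2 hab), dif_neg (hne _ _ a.2 hab.symm)]
    exact congrArg some (ConnectedComponent.connectedComponentMk_eq_of_adj hab)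
  let r := ConnectedComponent.lift ρ fun _ _ p _ => p.apply_eq_of_forall_adj hρ
  have hleft : Function.LeftInverse r φ := by
    rintro (_ | c)
    · simp [r, φ, ρ]
    · induction c using ConnectedComponent.ind with
      | h x =>
        have hx : (x : V) ≠ v := fun h => hv (h ▸ x.2)
        simp only [r, φ, ρ, ι, Option.elim_some, ConnectedComponent.map_mk,
          ConnectedComponent.lift_mk]
        exact dif_neg hx
  have hsurj : Function.Surjective φ := by
    refine ConnectedComponent.ind fun x => ?_
    by_cases hx : (x : V) = v
    · exact ⟨none, congrArg _ (Subtype.ext hx.symm)⟩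
    · exact ⟨some ((G.induce S).connectedComponentMk
        ⟨x, (Set.mem_insert_iff.mp x.2).resolve_left hx⟩), rfl⟩
  rw [H0, ← Nat.card_eq_of_bijective φ ⟨hleft.injective, hsurj⟩, Finite.card_option, H0]

lemma H0_insert_of_pendant (hv : v ∉ S) (hu : u ∈ S) (hvu : G.Adj v u)
    (huniq : ∀ w ∈ S, G.Adj v w → w = u) :
    H0 G (insert v S) = H0 G S := by
  classical
  let ι := (G.induceHomOfLE (Set.subset_insert v S)).toHom
  -- collapsing `v` onto its neighbour `u` retracts the components onto those of `G[S]`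
  let ρ : ↥(insert v S) → (G.induce S).ConnectedComponent := fun x =>
    (G.induce S).connectedComponentMk <|
      if h : (x : V) = v then ⟨u, hu⟩ else ⟨x, (Set.mem_insert_iff.mp x.2).resolve_left h⟩
  have hρ : ∀ a b, (G.induce (insert v S)).Adj a b → ρ a = ρ b := by
    have hv_adj : ∀ x y : V, y ∈ insert v S → G.Adj x y → x = v → y = u := by
      rintro x y (rfl | hy) hxy rfl
      · exact absurd rfl hxy.ne
      · exact huniq _ hy hxy
    intro a b (hab : G.Adj a b)
    simp only [ρ]
    by_cases ha : (a : V) = v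
    · have hb : (b : V) ≠ v := fun hb => hab.ne (ha.trans hb.symm)
      rw [dif_pos ha, dif_neg hb]
      exact congrArg _ (Subtype.ext (hv_adj _ _ b.2 hab ha).symm)
    by_cases hb : (b : V) = v
    · rw [dif_neg ha, dif_pos hb]
      exact congrArg _ (Subtype.ext (hv_adj _ _ a.2 hab.symm hb))
    rw [dif_neg ha, dif_neg hb]
    exact ConnectedComponent.connectedComponentMk_eq_of_adj hab
  let r := ConnectedComponent.lift ρ fun _ _ p _ => p.apply_eq_of_forall_adj hρ
  have hleft : Function.LeftInverse r (ConnectedComponent.map ι) := by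
    refine ConnectedComponent.ind fun x => ?_
    have hx : (x : V) ≠ v := fun h => hv (h ▸ x.2)
    simp only [r, ρ, ι, ConnectedComponent.map_mk, ConnectedComponent.lift_mk]
    exact congrArg _ (dif_neg hx)
  have hsurj : Function.Surjective (ConnectedComponent.map ι) := by
    refine ConnectedComponent.ind fun x => ?_
    by_cases hx : (x : V) = v
    · refine ⟨(G.induce S).connectedComponentMk ⟨u, hu⟩, ?_⟩
      refine ConnectedComponent.connectedComponentMk_eq_of_adj ?_
      change G.Adj u x
      rw [hx]
      exact hvu.symm
    · exact ⟨(G.induce S).connectedComponentMk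
        ⟨x, (Set.mem_insert_iff.mp x.2).resolve_left hx⟩, rfl⟩
  exact (Nat.card_eq_of_bijective _ ⟨hleft.injective, hsurj⟩).symm

lemma H0_empty : H0 G ∅ = 0 := Nat.card_of_isEmpty

namespace Finset

variable {α R : Type*} [DecidableEq α] [CommRing R]

lemma sum_powerset_insert_neg_one_pow_card_mul {s : Finset α} {a : α} (ha : a ∉ s)
    (f : Finset α → R) :
    ∑ t ∈ (insert a s).powerset, (-1 : R) ^ #t * f t =
      ∑ t ∈ s.powerset, (-1 : R) ^ #t * (f t - f (insert a t)) := by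
  rw [sum_powerset_insert ha, ← sum_add_distrib]
  refine sum_congr rfl fun t ht => ?_
  rw [card_insert_of_notMem fun hat => ha (mem_powerset.mp ht hat), pow_succ]
  ring

lemma sum_powerset_neg_one_pow_card_mul_eq_zero_of_insert {s : Finset α} {a : α} (ha : a ∈ s)
    (f : Finset α → R) (hf : ∀ t ⊆ s.erase a, f (insert a t) = f t) :
    ∑ t ∈ s.powerset, (-1 : R) ^ #t * f t = 0 := by
  rw [← insert_erase ha, sum_powerset_insert_neg_one_pow_card_mul (notMem_erase a s)]
  exact sum_eq_zero fun t ht => by rw [hf t (mem_powerset.mp ht), sub_self, mul_zero]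

lemma sum_powerset_neg_one_pow_card_mul_ite_notMem {s : Finset α} {a : α} (ha : a ∈ s)
    (hs : (s.erase a).Nonempty) :
    ∑ t ∈ s.powerset, (-1 : R) ^ #t * (if a ∈ t then 0 else 1) = 0 := by
  rw [← insert_erase ha, sum_powerset_insert_neg_one_pow_card_mul (notMem_erase a s)]
  calc ∑ t ∈ (s.erase a).powerset,
        (-1 : R) ^ #t * ((if a ∈ t then 0 else 1) - if a ∈ insert a t then 0 else 1)
      = ∑ t ∈ (s.erase a).powerset, (-1 : R) ^ #t := by
        refine sum_congr rfl fun t ht => ?_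
        have hat : a ∉ t := fun hat => notMem_erase a s (mem_powerset.mp ht hat)
        simp [hat]
    _ = 0 := by
        exact_mod_cast congrArg (Int.cast : ℤ → R)
          (sum_powerset_neg_one_pow_card_of_nonempty hs)

lemma sum_filter_ne_empty_neg_one_pow_card_sub_one_mul (s : Finset α) (f : Finset α → R)
    (hf : f ∅ = 0) :
    ∑ t ∈ s.powerset.filter (· ≠ ∅), (-1 : R) ^ (#t - 1) * f t =
      -∑ t ∈ s.powerset, (-1 : R) ^ #t * f t := by
  rw [sum_filter, ← sum_neg_distrib]
  refine sum_congr rfl fun t _ => ?_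
  split_ifs with ht
  · obtain ⟨k, hk⟩ :=
      Nat.exists_eq_succ_of_ne_zero (card_ne_zero.mpr (nonempty_iff_ne_empty.mpr ht))
    rw [hk, Nat.succ_sub_one, pow_succ]
    ring
  · rw [not_not.mp ht, hf, mul_zero, neg_zero]

end Finset

open Finset in
lemma sum_powerset_neg_one_pow_card_mul_H0_of_pendant [Fintype V] [DecidableEq V] {w : V}
    (hvu : G.Adj v u) (huniq : ∀ x, G.Adj v x → x = u) (hwu : w ≠ u) (hwv : w ≠ v) :
    ∑ S ∈ (univ : Finset V).powerset, (-1 : ℤ) ^ #S * (H0 G S : ℤ) = 0 := by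
  have hleaf : ∀ T : Finset V, v ∉ T →
      (H0 G (insert v T : Finset V) : ℤ) = H0 G T + if u ∈ T then 0 else 1 := by
    intro T hvT
    rw [coe_insert]
    split_ifs with huT
    · rw [H0_insert_of_pendant (by simpa) (by simpa) hvu fun x _ hx => huniq x hx, add_zero]
    · rw [H0_insert_of_isolated (by simpa) fun x hx hvx => huT (huniq x hvx ▸ hx)]
      push_cast
      rfl
  have hu : u ∈ univ.erase v := mem_erase.mpr ⟨hvu.ne.symm, mem_univ u⟩
  rw [← insert_erase (mem_univ v), sum_powerset_insert_neg_one_pow_card_mul (notMem_erase v _)]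
  calc ∑ T ∈ (univ.erase v).powerset,
        (-1 : ℤ) ^ #T * ((H0 G T : ℤ) - H0 G (insert v T : Finset V))
      = -∑ T ∈ (univ.erase v).powerset, (-1 : ℤ) ^ #T * (if u ∈ T then 0 else 1) := by
        rw [← sum_neg_distrib]
        refine sum_congr rfl fun T hT => ?_
        rw [hleaf T fun hvT => notMem_erase v _ (mem_powerset.mp hT hvT)]
        ring
    _ = 0 := by
        rw [sum_powerset_neg_one_pow_card_mul_ite_notMem hu ⟨w, by simp [hwu, hwv]⟩, neg_zero]

lemma annulusWithAppendage_adj_last_iff {n : ℕ} (hn : 2 ≤ n) (w : Fin n) :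
    (annulusWithAppendage n).Adj ⟨n - 1, by omega⟩ w ↔ w = ⟨0, by omega⟩ := by
  simp only [annulusWithAppendage, SimpleGraph.fromRel_adj, ne_eq, Fin.ext_iff,
    lt_self_iff_false, false_and, and_false, true_and, false_or]
  omega

/-- A closed annular collection of `n-1` subsystems with one appendage subsystem
attached has vanishing connectivity count: with
`J(S) = H₀(G[S]) + (1 if {0,…,n-2} ⊆ S else 0)`,
`Σ_{S ≠ ∅} (-1)^(|S|-1) J(S) = 0`. -/
theorem connectivity_count_annulus_with_appendage (n : ℕ) (hn : 4 ≤ n) :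
    ∑ S ∈ (Finset.univ : Finset (Fin n)).powerset.filter (· ≠ ∅),
      (-1 : ℤ) ^ (S.card - 1) *
        ((H0 (annulusWithAppendage n) (↑S : Set (Fin n)) : ℤ) +
          (if Finset.univ.filter (fun i : Fin n => (i : ℕ) < n - 1) ⊆ S then 1 else 0))
    = 0 := by
  set A := Finset.univ.filter fun i : Fin n => (i : ℕ) < n - 1
  have hzero : (⟨0, by omega⟩ : Fin n) ∈ A := by
    simp only [A, Finset.mem_filter, Finset.mem_univ, true_and]; omega
  have hlast : (⟨n - 1, by omega⟩ : Fin n) ∉ A := by simp [A]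
  have hadj := annulusWithAppendage_adj_last_iff (n := n) (by omega)
  rw [Finset.sum_filter_ne_empty_neg_one_pow_card_sub_one_mul _ _
    (by simp [H0_empty, Finset.ne_empty_of_mem hzero]), neg_eq_zero]
  simp only [mul_add, Finset.sum_add_distrib]
  rw [sum_powerset_neg_one_pow_card_mul_H0_of_pendant ((hadj _).mpr rfl) (fun x => (hadj x).mp)
      (w := ⟨1, by omega⟩) (by simp [Fin.ext_iff]) (by simp only [ne_eq, Fin.ext_iff]; omega),
    Finset.sum_powerset_neg_one_pow_card_mul_eq_zero_of_insert
      (Finset.mem_univ ⟨n - 1, by omega⟩) _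
      fun t _ => by simp only [Finset.subset_insert_iff_of_notMem hlast],
    zero_add]
end

section
/- Let N ≥ 3 and f : Finset (Fin N) → ℝ. For each nonempty Q ⊆ Fin N define I_f(Q) := Σ_{P ⊆ Q, P ≠ ∅} (−1)^{|P|−1} f(P). Suppose (i) I_f(P) = 0 for every subset P with 3 ≤ |P| ≤ N−1, and (ii) I_f({i,j}) = 0 for every pair {i,j} that is not of the form {i, i+1 mod N}. Then I_f(Fin N) = (−1)^{N−1} [ Σ_{i=0}^{N−1} ( f({i}) − f({i, i+1 mod N}) ) + f(univ) ]. (For an annular arrangement of N subsystems, where all intermediate multipartite informations vanish except nearest-neighbour mutual informations, the N-partite information reduces to the nearest-neighbour expression, yielding the generalized strong subadditivity relation.) -/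
open Finset

section BooleanLattice

variable {ι R : Type*} [DecidableEq ι] [CommRing R]

theorem sum_powerset_neg_one_pow_card_eq_ite (Q : Finset ι) :
    ∑ P ∈ Q.powerset, (-1 : R) ^ #P = if Q = ∅ then 1 else 0 := by
  exact_mod_cast congrArg (Int.cast : ℤ → R) (sum_powerset_neg_one_pow_card (x := Q))

theorem sum_Icc_neg_one_pow_card {S Q : Finset ι} (hSQ : S ⊆ Q) :
    ∑ P ∈ Icc S Q, (-1 : R) ^ #P = if S = Q then (-1) ^ #S else 0 := by
  have hinj : Set.InjOn (S ∪ ·) ((Q \ S).powerset : Set (Finset ι)) := by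
    intro T hT T' hT' h
    simp only [coe_powerset, Set.mem_preimage, Set.mem_powerset_iff, coe_subset] at hT hT'
    rw [← union_sdiff_cancel_left (disjoint_of_subset_right hT disjoint_sdiff),
      ← union_sdiff_cancel_left (disjoint_of_subset_right hT' disjoint_sdiff)]
    exact congrArg (· \ S) h
  rw [Icc_eq_image_powerset hSQ, sum_image hinj]
  have hcard : ∀ T ∈ (Q \ S).powerset, (-1 : R) ^ #(S ∪ T) = (-1) ^ #S * (-1) ^ #T := by
    intro T hT
    rw [card_union_of_disjoint (disjoint_of_subset_right (mem_powerset.1 hT) disjoint_sdiff),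
      pow_add]
  rw [sum_congr rfl hcard, ← mul_sum, sum_powerset_neg_one_pow_card_eq_ite]
  by_cases h : S = Q
  · simp [h]
  · have hQS : ¬Q ⊆ S := fun hQS => h (hSQ.antisymm hQS)
    simp [h, hQS, sdiff_eq_empty_iff_subset]

theorem sum_powerset_neg_one_pow_mul_sum_powerset (g : Finset ι → R) (Q : Finset ι) :
    ∑ P ∈ Q.powerset, (-1) ^ #P * ∑ S ∈ P.powerset, (-1) ^ #S * g S = g Q := by
  calc ∑ P ∈ Q.powerset, (-1) ^ #P * ∑ S ∈ P.powerset, (-1) ^ #S * g S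
      = ∑ S ∈ Q.powerset, ∑ P ∈ Icc S Q, (-1) ^ #P * ((-1) ^ #S * g S) := by
        simp_rw [mul_sum]
        refine sum_comm' fun P S => ?_
        simp only [mem_powerset, mem_Icc]
        exact ⟨fun ⟨hPQ, hSP⟩ => ⟨⟨hSP, hPQ⟩, hSP.trans hPQ⟩, fun ⟨⟨hSP, hPQ⟩, _⟩ => ⟨hPQ, hSP⟩⟩
    _ = ∑ S ∈ Q.powerset, (if S = Q then (-1) ^ #S else 0) * ((-1) ^ #S * g S) := by
        refine sum_congr rfl fun S hS => ?_
        rw [← sum_mul, sum_Icc_neg_one_pow_card (mem_powerset.1 hS)]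
    _ = g Q := by
        rw [sum_eq_single_of_mem Q (mem_powerset_self Q) fun S _ hS => by simp [hS], if_pos rfl,
          ← mul_assoc, ← pow_add, Even.neg_one_pow ⟨_, rfl⟩, one_mul]

end BooleanLattice

section MultiInfo

variable {ι : Type*} [DecidableEq ι] (f : Finset ι → ℝ)

theorem multiInfo_eq_sub_sum_powerset (Q : Finset ι) :
    multiInfo f Q = f ∅ - ∑ P ∈ Q.powerset, (-1) ^ #P * f P := by
  rw [multiInfo, filter_ne', ← add_sum_erase _ _ (empty_mem_powerset Q), card_empty, pow_zero,
    one_mul, sub_add_cancel_left, ← sum_neg_distrib]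
  refine sum_congr rfl fun P hP => ?_
  rw [← Nat.sub_add_cancel (card_pos.2 (nonempty_iff_ne_empty.2 (ne_of_mem_erase hP))), pow_succ]
  simp

theorem multiInfo_pair {i j : ι} (hij : i ≠ j) :
    multiInfo f {i, j} = f {i} + f {j} - f {i, j} := by
  rw [multiInfo_eq_sub_sum_powerset, sum_powerset_insert (by simpa using hij), ← insert_empty]
  simp only [sum_powerset_insert (notMem_empty j)]
  simp [hij]
  ring

theorem multiInfo_multiInfo {Q : Finset ι} (hQ : Q.Nonempty) :
    multiInfo (multiInfo f) Q = f Q := by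
  simp_rw [multiInfo_eq_sub_sum_powerset (multiInfo f), multiInfo_empty,
    multiInfo_eq_sub_sum_powerset f, mul_sub, sum_sub_distrib, ← sum_mul,
    sum_powerset_neg_one_pow_mul_sum_powerset, sum_powerset_neg_one_pow_card_eq_ite,
    if_neg hQ.ne_empty]
  ring

end MultiInfo

section Annular

variable {G : Type*} [AddGroup G] {a : G}

theorem ne_zero_of_add_self_ne_zero (ha : a + a ≠ 0) : a ≠ 0 := by
  rintro rfl
  exact ha (add_zero 0)

theorem self_ne_add_of_add_self_ne_zero (ha : a + a ≠ 0) (k : G) : k ≠ k + a :=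
  left_ne_add.2 (ne_zero_of_add_self_ne_zero ha)

variable [DecidableEq G]

theorem pair_add_injective (ha : a + a ≠ 0) :
    Function.Injective fun k : G => ({k, k + a} : Finset G) := by
  intro k l hkl
  have hk : k ∈ ({l, l + a} : Finset G) := by simp [← hkl]
  have hl : l ∈ ({k, k + a} : Finset G) := by simp [hkl]
  simp only [mem_insert, mem_singleton] at hk hl
  rcases hk with rfl | rfl
  · rfl
  · rcases hl with hl | hl
    · exact hl.symm
    · exact absurd (by simpa [add_assoc] using hl) ha

theorem three_le_card_of_add_self_ne_zero [Fintype G] (ha : a + a ≠ 0) : 3 ≤ Fintype.card G := by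
  have ha₀ := ne_zero_of_add_self_ne_zero ha
  calc 3 = #({0, a, a + a} : Finset G) :=
        (card_eq_three.2 ⟨0, a, a + a, ha₀.symm, ha.symm, left_ne_add.2 ha₀, rfl⟩).symm
    _ ≤ Fintype.card G := card_le_univ _

variable [Fintype G]

variable (a) in
def adjacentPairs : Finset (Finset G) :=
  univ.image fun k => {k, k + a}

@[simp]
theorem mem_adjacentPairs {P : Finset G} : P ∈ adjacentPairs a ↔ ∃ k, {k, k + a} = P := by
  simp [adjacentPairs]

theorem sum_adjacentPairs {M : Type*} [AddCommMonoid M] (ha : a + a ≠ 0) (g : Finset G → M) :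
    ∑ P ∈ adjacentPairs a, g P = ∑ k, g {k, k + a} :=
  sum_image (pair_add_injective ha).injOn

theorem card_of_mem_adjacentPairs (ha : a + a ≠ 0) {P : Finset G} (hP : P ∈ adjacentPairs a) :
    #P = 2 := by
  obtain ⟨k, rfl⟩ := mem_adjacentPairs.1 hP
  exact card_pair (self_ne_add_of_add_self_ne_zero ha k)

theorem multiInfo_eq_zero_of_notMem_adjacentPairs {f : Finset G → ℝ}
    (h3 : ∀ P : Finset G, 3 ≤ #P → P ≠ univ → multiInfo f P = 0)
    (h2 : ∀ i j : G, i ≠ j → (∀ k : G, ({i, j} : Finset G) ≠ {k, k + a}) →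
      multiInfo f {i, j} = 0)
    {P : Finset G} (hP1 : #P ≠ 1) (hPa : P ∉ adjacentPairs a) (hPu : P ≠ univ) :
    multiInfo f P = 0 := by
  rcases (by omega : #P = 0 ∨ #P = 2 ∨ 3 ≤ #P) with hP0 | hP2 | hP3
  · rw [card_eq_zero.1 hP0, multiInfo_empty]
  · obtain ⟨i, j, hij, rfl⟩ := card_eq_two.1 hP2
    exact h2 i j hij fun k hk => hPa (mem_adjacentPairs.2 ⟨k, hk.symm⟩)
  · exact h3 P hP3 hPu

theorem multiInfo_multiInfo_univ_of_annular (ha : a + a ≠ 0) (f : Finset G → ℝ)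
    (h3 : ∀ P : Finset G, 3 ≤ #P → P ≠ univ → multiInfo f P = 0)
    (h2 : ∀ i j : G, i ≠ j → (∀ k : G, ({i, j} : Finset G) ≠ {k, k + a}) →
      multiInfo f {i, j} = 0) :
    multiInfo (multiInfo f) univ = ∑ i, multiInfo f {i} - ∑ k, multiInfo f {k, k + a} +
      (-1) ^ (Fintype.card G - 1) * multiInfo f univ := by
  have huniv : 3 ≤ #(univ : Finset G) := three_le_card_of_add_self_ne_zero ha
  set support := powersetCard 1 univ ∪ adjacentPairs a ∪ {univ}
  have hsub : support ⊆ univ.powerset.filter (· ≠ ∅) := by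
    intro P hP
    rw [mem_filter, mem_powerset, ← nonempty_iff_ne_empty, ← card_pos]
    rcases mem_union.1 hP with hP | hP
    · rcases mem_union.1 hP with hP | hP
      · exact ⟨subset_univ P, by rw [mem_powersetCard_univ.1 hP]; omega⟩
      · exact ⟨subset_univ P, by rw [card_of_mem_adjacentPairs ha hP]; omega⟩
    · rw [mem_singleton.1 hP]
      exact ⟨subset_univ _, by omega⟩
  have hvanish : ∀ P ∈ univ.powerset.filter (· ≠ ∅), P ∉ support →
      (-1) ^ (#P - 1) * multiInfo f P = 0 := by
    intro P _ hP
    simp only [support, mem_union, mem_powersetCard_univ, mem_singleton, not_or] at hP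
    rw [multiInfo_eq_zero_of_notMem_adjacentPairs h3 h2 hP.1.1 hP.1.2 hP.2, mul_zero]
  have hdisj₁ : Disjoint (powersetCard 1 univ) (adjacentPairs a) :=
    disjoint_left.2 fun P hP1 hP2 => by
      rw [mem_powersetCard_univ, card_of_mem_adjacentPairs ha hP2] at hP1
      omega
  have hdisj₂ : Disjoint (powersetCard 1 univ ∪ adjacentPairs a) {univ} :=
    disjoint_singleton_right.2 fun h => by
      rcases mem_union.1 h with h | h
      · rw [mem_powersetCard_univ] at h; omega
      · rw [card_of_mem_adjacentPairs ha h] at huniv; omega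
  rw [multiInfo, ← sum_subset hsub hvanish, sum_union hdisj₂, sum_union hdisj₁, sum_singleton,
    powersetCard_one, sum_map, sum_adjacentPairs ha]
  simp [card_pair (self_ne_add_of_add_self_ne_zero ha _), sub_eq_add_neg]

theorem multiInfo_univ_of_annular (ha : a + a ≠ 0) (f : Finset G → ℝ)
    (h3 : ∀ P : Finset G, 3 ≤ #P → P ≠ univ → multiInfo f P = 0)
    (h2 : ∀ i j : G, i ≠ j → (∀ k : G, ({i, j} : Finset G) ≠ {k, k + a}) →
      multiInfo f {i, j} = 0) :
    multiInfo f univ =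
      (-1) ^ (Fintype.card G - 1) * (∑ i, (f {i} - f {i, i + a}) + f univ) := by
  have hshift : ∑ k, f {k + a} = ∑ k, f {k} := Equiv.sum_comp (Equiv.addRight a) (f {·})
  have hsign : (-1 : ℝ) ^ (Fintype.card G - 1) * (-1) ^ (Fintype.card G - 1) = 1 := by
    rw [← pow_add, Even.neg_one_pow ⟨_, rfl⟩]
  have key := multiInfo_multiInfo f ⟨0, mem_univ 0⟩
  rw [multiInfo_multiInfo_univ_of_annular ha f h3 h2] at key
  simp only [multiInfo_singleton, multiInfo_pair f (self_ne_add_of_add_self_ne_zero ha _),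
    sum_sub_distrib, sum_add_distrib, hshift] at key
  rw [sum_sub_distrib]
  linear_combination (-1 : ℝ) ^ (Fintype.card G - 1) * key - multiInfo f univ * hsign

end Annular

/-- For an annular arrangement of `N ≥ 3` subsystems, where all intermediate
multipartite informations vanish except the nearest-neighbour mutual
informations, the `N`-partite information reduces to the nearest-neighbour
expression:
`I_f(Fin N) = (-1)^(N-1) [ Σ_i (f({i}) - f({i, i+1 mod N})) + f(univ) ]`. -/
theorem multiInfo_annular_reduction (N : ℕ) (hN : 3 ≤ N) (f : Finset (Fin N) → ℝ)
    (h3 : ∀ P : Finset (Fin N), 3 ≤ P.card → P.card ≤ N - 1 → multiInfo f P = 0)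
    (h2 : ∀ i j : Fin N, i ≠ j →
      (∀ k : Fin N, ({i, j} : Finset (Fin N)) ≠ {k, k + (⟨1, by omega⟩ : Fin N)}) →
      multiInfo f {i, j} = 0) :
    multiInfo f (Finset.univ : Finset (Fin N))
      = (-1 : ℝ) ^ (N - 1) *
          ((∑ i : Fin N, (f {i} - f {i, i + (⟨1, by omega⟩ : Fin N)})) +
            f Finset.univ) := by
  have : NeZero N := ⟨by omega⟩
  have ha : (⟨1, by omega⟩ + ⟨1, by omega⟩ : Fin N) ≠ 0 := by
    simp only [Ne, Fin.ext_iff, Fin.val_add, Fin.val_zero]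
    rw [Nat.mod_eq_of_lt (by omega)]
    omega
  have h3' : ∀ P : Finset (Fin N), 3 ≤ #P → P ≠ univ → multiInfo f P = 0 := fun P hP hPu =>
    h3 P hP (Nat.le_sub_one_of_lt (by simpa using card_lt_card (ssubset_univ_iff.2 hPu)))
  simpa using multiInfo_univ_of_annular ha f h3' h2
end
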